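/- arXiv:2604.17006 — 2 statements merged into one kernel-verified Lean document; each statement's English description precedes it below -/
import Mathlib

section
/- Let p_0 = (B⁰, i⁰, j⁰) ∈ 𝕄 satisfy μ_ℝ(p_0)_k = ζ_ℝ^k and μ_ℂ(p_0)_k = 0 for all k, where ζ_ℝ = (ζ_ℝ^k) is a tuple of matrices, and let A = (A,I,J) ∈ 𝕄 satisfy μ_ℂ(p_0 + A) = 0 and l_{p_0}^*(A) = 0. Then for every ℏ ∈ ℂ \ {0} the point p_A(ℏ) ∈ 𝕄 satisfies μ_ℂ(p_A(ℏ))_k = −2i·ζ_ℝ^k for every vertex k. -/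
open Matrix Filter Topology

namespace QuiverCL

noncomputable section

variable {n : ℕ} {E : Type*}

/-- Cast a matrix along equalities of vertices. -/
def castM2 (v : Fin n → ℕ) {a b a' b' : Fin n} (ea : a = a') (eb : b = b')
    (M : Matrix (Fin (v a)) (Fin (v b)) ℂ) : Matrix (Fin (v a')) (Fin (v b')) ℂ :=
  Matrix.reindex (finCongr (congrArg v ea)) (finCongr (congrArg v eb)) M

/-- The quiver representation space `𝕄`: a triple `(B, i, j)` of families of matrices,
`B h : V (src h) → V (tgt h)`, `i k : W k → V k`, `j k : V k → W k`
(matrices act on column vectors, so `Hom(V_a, V_b)` is `Matrix (Fin (v b)) (Fin (v a)) ℂ`). -/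
abbrev Rep (src tgt : E → Fin n) (v w : Fin n → ℕ) : Type _ :=
  (∀ h : E, Matrix (Fin (v (tgt h))) (Fin (v (src h))) ℂ)
  × (∀ k : Fin n, Matrix (Fin (v k)) (Fin (w k)) ℂ)
  × (∀ k : Fin n, Matrix (Fin (w k)) (Fin (v k)) ℂ)

/-- `ε(h) = 1` for `h ∈ Ω` and `ε(h) = -1` for `h ∈ Ω̄`. -/
def eps (Ω : E → Prop) [DecidablePred Ω] (h : E) : ℂ := if Ω h then 1 else -1

/-- The matrix `B_{h̄}` attached to the reversed edge, recast so that it is a matrix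
`V (tgt h) → V (src h)`. -/
def Bbar (src tgt : E → Fin n) (bar : E → E) (v w : Fin n → ℕ)
    (hbs : ∀ h, src (bar h) = tgt h) (hbt : ∀ h, tgt (bar h) = src h)
    (p : Rep src tgt v w) (h : E) : Matrix (Fin (v (src h))) (Fin (v (tgt h))) ℂ :=
  castM2 v (hbt h) (hbs h) (p.1 (bar h))

/-- The real moment map, componentwise:
`μ_ℝ(B,i,j)_k = (i/2)·[Σ_{in(h)=k} (B_h B_h† − B_{h̄}† B_{h̄}) + i_k i_k† − j_k† j_k]`. -/
def muR [Fintype E] (src tgt : E → Fin n) (bar : E → E) (v w : Fin n → ℕ)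
    (hbs : ∀ h, src (bar h) = tgt h) (hbt : ∀ h, tgt (bar h) = src h)
    (p : Rep src tgt v w) (k : Fin n) : Matrix (Fin (v k)) (Fin (v k)) ℂ :=
  (Complex.I / 2) •
    ((∑ h : E, if e : tgt h = k then
        castM2 v e e
          (p.1 h * (p.1 h)ᴴ -
            (Bbar src tgt bar v w hbs hbt p h)ᴴ * Bbar src tgt bar v w hbs hbt p h)
      else 0)
      + (p.2.1 k * (p.2.1 k)ᴴ - (p.2.2 k)ᴴ * p.2.2 k))

/-- The complex moment map, componentwise:
`μ_ℂ(B,i,j)_k = Σ_{in(h)=k} ε(h)·B_h B_{h̄} + i_k j_k`. -/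
def muC [Fintype E] (src tgt : E → Fin n) (bar : E → E) (Ω : E → Prop) [DecidablePred Ω]
    (v w : Fin n → ℕ)
    (hbs : ∀ h, src (bar h) = tgt h) (hbt : ∀ h, tgt (bar h) = src h)
    (p : Rep src tgt v w) (k : Fin n) : Matrix (Fin (v k)) (Fin (v k)) ℂ :=
  (∑ h : E, if e : tgt h = k then
      eps Ω h • castM2 v e e (p.1 h * Bbar src tgt bar v w hbs hbt p h)
    else 0)
    + p.2.1 k * p.2.2 k

/-- The hyperkähler rotation `HK_ξ(B,i,j) = (B_h − ε(h)·ξ·B_{h̄}†, i_k − ξ·j_k†, j_k + ξ·i_k†)`. -/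
def HK (src tgt : E → Fin n) (bar : E → E) (Ω : E → Prop) [DecidablePred Ω]
    (v w : Fin n → ℕ)
    (hbs : ∀ h, src (bar h) = tgt h) (hbt : ∀ h, tgt (bar h) = src h)
    (ξ : ℂ) (p : Rep src tgt v w) : Rep src tgt v w :=
  ⟨fun h => p.1 h - (eps Ω h * ξ) • (Bbar src tgt bar v w hbs hbt p h)ᴴ,
   fun k => p.2.1 k - ξ • (p.2.2 k)ᴴ,
   fun k => p.2.2 k + ξ • (p.2.1 k)ᴴ⟩

/-- The gauge action `g·(B,i,j) = (g_{in(h)} B_h g_{out(h)}⁻¹, g_k i_k, j_k g_k⁻¹)`. -/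
def gauge (src tgt : E → Fin n) (v w : Fin n → ℕ)
    (g : ∀ k : Fin n, Matrix (Fin (v k)) (Fin (v k)) ℂ) (p : Rep src tgt v w) :
    Rep src tgt v w :=
  ⟨fun h => g (tgt h) * p.1 h * (g (src h))⁻¹,
   fun k => g k * p.2.1 k,
   fun k => p.2.2 k * (g k)⁻¹⟩

/-- The infinitesimal gauge action `l_p(ξ) = (ξ_{in(h)} B_h − B_h ξ_{out(h)}, ξ_k i_k, −j_k ξ_k)`. -/
def lp (src tgt : E → Fin n) (v w : Fin n → ℕ)
    (p : Rep src tgt v w) (ξ : ∀ k : Fin n, Matrix (Fin (v k)) (Fin (v k)) ℂ) :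
    Rep src tgt v w :=
  ⟨fun h => ξ (tgt h) * p.1 h - p.1 h * ξ (src h),
   fun k => ξ k * p.2.1 k,
   fun k => -(p.2.2 k * ξ k)⟩

/-- The adjoint of the infinitesimal gauge action, componentwise:
`l_p^*(q)_k = Σ_{in(h)=k} (A_h B_h† − B_{h̄}† A_{h̄}) + I_k i_k† − j_k† J_k`. -/
def lpStar [Fintype E] (src tgt : E → Fin n) (bar : E → E) (v w : Fin n → ℕ)
    (hbs : ∀ h, src (bar h) = tgt h) (hbt : ∀ h, tgt (bar h) = src h)
    (p q : Rep src tgt v w) (k : Fin n) : Matrix (Fin (v k)) (Fin (v k)) ℂ :=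
  (∑ h : E, if e : tgt h = k then
      castM2 v e e
        (q.1 h * (p.1 h)ᴴ -
          (Bbar src tgt bar v w hbs hbt p h)ᴴ * Bbar src tgt bar v w hbs hbt q h)
    else 0)
    + (q.2.1 k * (p.2.1 k)ᴴ - (p.2.2 k)ᴴ * q.2.2 k)

/-- The hermitian inner product
`⟨q, q′⟩ = Σ_h Tr(A_h A′_h†) + Σ_k Tr(I_k I′_k†) + Σ_k Tr(J_k J′_k†)` on `𝕄`. -/
def innerRep [Fintype E] (src tgt : E → Fin n) (v w : Fin n → ℕ)
    (q q' : Rep src tgt v w) : ℂ :=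
  (∑ h : E, (q.1 h * (q'.1 h)ᴴ).trace)
    + (∑ k : Fin n, (q.2.1 k * (q'.2.1 k)ᴴ).trace)
    + (∑ k : Fin n, (q.2.2 k * (q'.2.2 k)ᴴ).trace)

/-- The complex symplectic form
`ω_ℂ(q, q′) = Σ_h ε(h)·Tr(A_h A′_{h̄}) + Σ_k Tr(I_k J′_k − I′_k J_k)`. -/
def omegaC [Fintype E] (src tgt : E → Fin n) (bar : E → E) (Ω : E → Prop) [DecidablePred Ω]
    (v w : Fin n → ℕ)
    (hbs : ∀ h, src (bar h) = tgt h) (hbt : ∀ h, tgt (bar h) = src h)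
    (q q' : Rep src tgt v w) : ℂ :=
  (∑ h : E, eps Ω h * (q.1 h * Bbar src tgt bar v w hbs hbt q' h).trace)
    + ∑ k : Fin n, ((q.2.1 k * q'.2.2 k).trace - (q'.2.1 k * q.2.2 k).trace)

/-- The scaling action `t∘(B,i,j)`: multiply the `Ω̄`-components and the `j`-components by `t`. -/
def scale (src tgt : E → Fin n) (Ω : E → Prop) [DecidablePred Ω] (v w : Fin n → ℕ)
    (t : ℂ) (p : Rep src tgt v w) : Rep src tgt v w :=
  ⟨fun h => if Ω h then p.1 h else t • p.1 h,
   fun k => p.2.1 k,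
   fun k => t • p.2.2 k⟩

/-- The second complex structure `J(m, m′) = (−(m′)†, m†)` on `𝕄 = 𝕄_Ω ⊕ 𝕄_Ω̄`. -/
def Jmap (src tgt : E → Fin n) (bar : E → E) (Ω : E → Prop) [DecidablePred Ω]
    (v w : Fin n → ℕ)
    (hbs : ∀ h, src (bar h) = tgt h) (hbt : ∀ h, tgt (bar h) = src h)
    (q : Rep src tgt v w) : Rep src tgt v w :=
  ⟨fun h => (-(eps Ω h)) • (Bbar src tgt bar v w hbs hbt q h)ᴴ,
   fun k => -((q.2.2 k)ᴴ),
   fun k => (q.2.1 k)ᴴ⟩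

/-- The point `p_A(ℏ)` of `𝕄`: for `h ∈ Ω` the `h`-component is `B⁰_h + A_h − ℏ·(B⁰_{h̄})†` and
for `h ∈ Ω̄` it is `ℏ⁻¹·(B⁰_h + A_h) + (B⁰_{h̄})†`; the `i`-components are
`i⁰_k + I_k − ℏ·(j⁰_k)†` and the `j`-components are `ℏ⁻¹·(j⁰_k + J_k) + (i⁰_k)†`. -/
def pA (src tgt : E → Fin n) (bar : E → E) (Ω : E → Prop) [DecidablePred Ω]
    (v w : Fin n → ℕ)
    (hbs : ∀ h, src (bar h) = tgt h) (hbt : ∀ h, tgt (bar h) = src h)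
    (p0 A : Rep src tgt v w) (ℏ : ℂ) : Rep src tgt v w :=
  ⟨fun h => if Ω h
      then p0.1 h + A.1 h - ℏ • (Bbar src tgt bar v w hbs hbt p0 h)ᴴ
      else ℏ⁻¹ • (p0.1 h + A.1 h) + (Bbar src tgt bar v w hbs hbt p0 h)ᴴ,
   fun k => p0.2.1 k + A.2.1 k - ℏ • (p0.2.2 k)ᴴ,
   fun k => ℏ⁻¹ • (p0.2.2 k + A.2.2 k) + (p0.2.1 k)ᴴ⟩

/-- The linearization of the real moment map equation:
`ℒ(p,ξ)_k = Σ_{in(h)=k} [B_h(B_h† ξ_{in(h)} − ξ_{out(h)} B_h†) −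
(B_{h̄}† ξ_{out(h)} − ξ_{in(h)} B_{h̄}†) B_{h̄}] + i_k i_k† ξ_k + ξ_k j_k† j_k`. -/
def linL [Fintype E] (src tgt : E → Fin n) (bar : E → E) (v w : Fin n → ℕ)
    (hbs : ∀ h, src (bar h) = tgt h) (hbt : ∀ h, tgt (bar h) = src h)
    (p : Rep src tgt v w) (ξ : ∀ k : Fin n, Matrix (Fin (v k)) (Fin (v k)) ℂ)
    (k : Fin n) : Matrix (Fin (v k)) (Fin (v k)) ℂ :=
  (∑ h : E, if e : tgt h = k then
      castM2 v e e
        (p.1 h * ((p.1 h)ᴴ * ξ (tgt h) - ξ (src h) * (p.1 h)ᴴ)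
          - ((Bbar src tgt bar v w hbs hbt p h)ᴴ * ξ (src h)
              - ξ (tgt h) * (Bbar src tgt bar v w hbs hbt p h)ᴴ)
            * Bbar src tgt bar v w hbs hbt p h)
    else 0)
    + (p.2.1 k * (p.2.1 k)ᴴ * ξ k + ξ k * (p.2.2 k)ᴴ * p.2.2 k)

/-- The product of the matrices of `p` along a list of edges `[h_1, …, h_m]`, as a matrix
`V_a → V_b`; when the list is a path with `a = out(h_1)` and `b = in(h_m)` this is the genuine
composite `B_{h_m} ⋯ B_{h_1}`. -/
def prodAlong (src tgt : E → Fin n) (v w : Fin n → ℕ) (p : Rep src tgt v w) :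
    List E → (a : Fin n) → (b : Fin n) → Matrix (Fin (v b)) (Fin (v a)) ℂ
  | [], a, b => if e : a = b then castM2 v e rfl (1 : Matrix (Fin (v a)) (Fin (v a)) ℂ) else 0
  | (h : E) :: rest, a, b =>
      prodAlong src tgt v w p rest (tgt h) b *
        (if e : src h = a then castM2 v rfl e (p.1 h) else 0)

/-! ### Auxiliary lemmas -/

lemma castM2_id (v : Fin n → ℕ) {a b : Fin n} (ea : a = a) (eb : b = b)
    (M : Matrix (Fin (v a)) (Fin (v b)) ℂ) : castM2 v ea eb M = M := rfl

lemma castM2_add (v : Fin n → ℕ) {a b a' b' : Fin n} (ea : a = a') (eb : b = b')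
    (M N : Matrix (Fin (v a)) (Fin (v b)) ℂ) :
    castM2 v ea eb (M + N) = castM2 v ea eb M + castM2 v ea eb N := by
  subst ea; subst eb; rfl

lemma castM2_sub (v : Fin n → ℕ) {a b a' b' : Fin n} (ea : a = a') (eb : b = b')
    (M N : Matrix (Fin (v a)) (Fin (v b)) ℂ) :
    castM2 v ea eb (M - N) = castM2 v ea eb M - castM2 v ea eb N := by
  subst ea; subst eb; rfl

lemma castM2_smul (v : Fin n → ℕ) {a b a' b' : Fin n} (ea : a = a') (eb : b = b') (c : ℂ)
    (M : Matrix (Fin (v a)) (Fin (v b)) ℂ) :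
    castM2 v ea eb (c • M) = c • castM2 v ea eb M := by
  subst ea; subst eb; rfl

lemma castM2_conjTranspose (v : Fin n → ℕ) {a b a' b' : Fin n} (ea : a = a') (eb : b = b')
    (M : Matrix (Fin (v a)) (Fin (v b)) ℂ) :
    (castM2 v ea eb M)ᴴ = castM2 v eb ea Mᴴ := by
  subst ea; subst eb; rfl

lemma castM2_castM2 (v : Fin n → ℕ) {a b a' b' a'' b'' : Fin n}
    (ea : a = a') (eb : b = b') (ea' : a' = a'') (eb' : b' = b'')
    (M : Matrix (Fin (v a)) (Fin (v b)) ℂ) :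
    castM2 v ea' eb' (castM2 v ea eb M) = castM2 v (ea.trans ea') (eb.trans eb') M := by
  subst ea; subst eb; subst ea'; subst eb'; rfl

lemma Rep.fst_congr (src tgt : E → Fin n) (v w : Fin n → ℕ) (p : Rep src tgt v w)
    {a b : E} (h : a = b) :
    p.1 a = castM2 v (congrArg tgt h).symm (congrArg src h).symm (p.1 b) := by
  subst h; rfl

/-- The main algebraic identity for `Ω`-edges (and for the `(i,j)`-components). -/
lemma alg1 {m l : Type*} [Fintype m] [Fintype l]
    (B a : Matrix m l ℂ) (C c : Matrix l m ℂ) {ℏ : ℂ} (hh : ℏ ≠ 0) :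
    (B + a - ℏ • Cᴴ) * (ℏ⁻¹ • (C + c) + Bᴴ)
      = ℏ⁻¹ • ((B + a) * (C + c)) + (-ℏ) • (B * C)ᴴ
        + (B * Bᴴ - Cᴴ * C) + (a * Bᴴ - Cᴴ * c) := by
  have h1 : ℏ * ℏ⁻¹ = 1 := mul_inv_cancel₀ hh
  have h2 : ℏ⁻¹ * ℏ = 1 := inv_mul_cancel₀ hh
  simp only [Matrix.conjTranspose_mul, Matrix.conjTranspose_neg, Matrix.conjTranspose_smul,
    star_neg, star_one, Matrix.mul_add, Matrix.add_mul, Matrix.sub_mul,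
    Matrix.mul_sub, Matrix.smul_mul, Matrix.mul_smul, smul_smul, h1, h2, one_smul, smul_add,
    smul_sub, neg_smul, smul_neg, neg_one_smul, neg_neg, neg_sub]
  abel

/-- The main algebraic identity for `Ω̄`-edges. -/
lemma alg2 {m l : Type*} [Fintype m] [Fintype l]
    (B a : Matrix m l ℂ) (C c : Matrix l m ℂ) {ℏ : ℂ} (hh : ℏ ≠ 0) :
    (-1 : ℂ) • ((ℏ⁻¹ • (B + a) + Cᴴ) * ((C + c) - ℏ • Bᴴ))
      = ℏ⁻¹ • ((-1 : ℂ) • ((B + a) * (C + c))) + (-ℏ) • ((-1 : ℂ) • (B * C))ᴴ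
        + (B * Bᴴ - Cᴴ * C) + (a * Bᴴ - Cᴴ * c) := by
  have h1 : ℏ * ℏ⁻¹ = 1 := mul_inv_cancel₀ hh
  have h2 : ℏ⁻¹ * ℏ = 1 := inv_mul_cancel₀ hh
  simp only [Matrix.conjTranspose_mul, Matrix.conjTranspose_neg, Matrix.conjTranspose_smul,
    star_neg, star_one, Matrix.mul_add, Matrix.add_mul, Matrix.sub_mul, Matrix.mul_sub,
    Matrix.smul_mul, Matrix.mul_smul, smul_smul, h1, h2, one_smul, smul_add, smul_sub,
    neg_smul, smul_neg, neg_one_smul, neg_neg, neg_sub, mul_one, one_mul, neg_mul, mul_neg]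
  abel

lemma castM2_Bbar_bar (src tgt : E → Fin n) (bar : E → E) (v w : Fin n → ℕ)
    (hinv : ∀ h, bar (bar h) = h)
    (hbs : ∀ h, src (bar h) = tgt h) (hbt : ∀ h, tgt (bar h) = src h)
    (p : Rep src tgt v w) (e : E) :
    castM2 v (hbt e) (hbs e) ((Bbar src tgt bar v w hbs hbt p (bar e))ᴴ) = (p.1 e)ᴴ := by
  show castM2 v (hbt e) (hbs e)
      ((castM2 v (hbt (bar e)) (hbs (bar e)) (p.1 (bar (bar e))))ᴴ) = (p.1 e)ᴴ
  rw [Rep.fst_congr src tgt v w p (hinv e), castM2_castM2, castM2_conjTranspose,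
    castM2_castM2, castM2_id]

lemma Bbar_pA (src tgt : E → Fin n) (bar : E → E) (Ω : E → Prop) [DecidablePred Ω]
    (v w : Fin n → ℕ)
    (hinv : ∀ h, bar (bar h) = h)
    (hbs : ∀ h, src (bar h) = tgt h) (hbt : ∀ h, tgt (bar h) = src h)
    (hor : ∀ h, Ω (bar h) ↔ ¬ Ω h)
    (p0 A : Rep src tgt v w) (ℏ : ℂ) (e : E) :
    Bbar src tgt bar v w hbs hbt (pA src tgt bar Ω v w hbs hbt p0 A ℏ) e
      = if Ω e then
          ℏ⁻¹ • (Bbar src tgt bar v w hbs hbt p0 e + Bbar src tgt bar v w hbs hbt A e)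
            + (p0.1 e)ᴴ
        else
          (Bbar src tgt bar v w hbs hbt p0 e + Bbar src tgt bar v w hbs hbt A e)
            - ℏ • (p0.1 e)ᴴ := by
  by_cases he : Ω e
  · have hnot : ¬ Ω (bar e) := fun hc => (hor e).mp hc he
    rw [if_pos he]
    show castM2 v (hbt e) (hbs e) ((pA src tgt bar Ω v w hbs hbt p0 A ℏ).1 (bar e)) = _
    rw [show (pA src tgt bar Ω v w hbs hbt p0 A ℏ).1 (bar e)
          = ℏ⁻¹ • (p0.1 (bar e) + A.1 (bar e))
            + (Bbar src tgt bar v w hbs hbt p0 (bar e))ᴴ from by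
        simp only [pA]; rw [if_neg hnot]]
    rw [castM2_add, castM2_smul, castM2_add,
      castM2_Bbar_bar src tgt bar v w hinv hbs hbt p0 e]
    rfl
  · have hyes : Ω (bar e) := (hor e).mpr he
    rw [if_neg he]
    show castM2 v (hbt e) (hbs e) ((pA src tgt bar Ω v w hbs hbt p0 A ℏ).1 (bar e)) = _
    rw [show (pA src tgt bar Ω v w hbs hbt p0 A ℏ).1 (bar e)
          = p0.1 (bar e) + A.1 (bar e)
            - ℏ • (Bbar src tgt bar v w hbs hbt p0 (bar e))ᴴ from by
        simp only [pA]; rw [if_pos hyes]]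
    rw [castM2_sub, castM2_add, castM2_smul,
      castM2_Bbar_bar src tgt bar v w hinv hbs hbt p0 e]
    rfl

lemma key_term (src tgt : E → Fin n) (bar : E → E) (Ω : E → Prop) [DecidablePred Ω]
    (v w : Fin n → ℕ)
    (hinv : ∀ h, bar (bar h) = h)
    (hbs : ∀ h, src (bar h) = tgt h) (hbt : ∀ h, tgt (bar h) = src h)
    (hor : ∀ h, Ω (bar h) ↔ ¬ Ω h)
    (p0 A : Rep src tgt v w) (ℏ : ℂ) (hh : ℏ ≠ 0) (e : E) :
    eps Ω e • ((pA src tgt bar Ω v w hbs hbt p0 A ℏ).1 e *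
        Bbar src tgt bar v w hbs hbt (pA src tgt bar Ω v w hbs hbt p0 A ℏ) e)
      = ℏ⁻¹ • (eps Ω e • ((p0 + A).1 e * Bbar src tgt bar v w hbs hbt (p0 + A) e))
        + (-ℏ) • (eps Ω e • (p0.1 e * Bbar src tgt bar v w hbs hbt p0 e))ᴴ
        + (p0.1 e * (p0.1 e)ᴴ
            - (Bbar src tgt bar v w hbs hbt p0 e)ᴴ * Bbar src tgt bar v w hbs hbt p0 e)
        + (A.1 e * (p0.1 e)ᴴ
            - (Bbar src tgt bar v w hbs hbt p0 e)ᴴ * Bbar src tgt bar v w hbs hbt A e) := by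
  have hadd1 : (p0 + A).1 e = p0.1 e + A.1 e := rfl
  have hadd2 : Bbar src tgt bar v w hbs hbt (p0 + A) e
      = Bbar src tgt bar v w hbs hbt p0 e + Bbar src tgt bar v w hbs hbt A e :=
    castM2_add v (hbt e) (hbs e) (p0.1 (bar e)) (A.1 (bar e))
  have hpAe : (pA src tgt bar Ω v w hbs hbt p0 A ℏ).1 e
      = if Ω e then p0.1 e + A.1 e - ℏ • (Bbar src tgt bar v w hbs hbt p0 e)ᴴ
        else ℏ⁻¹ • (p0.1 e + A.1 e) + (Bbar src tgt bar v w hbs hbt p0 e)ᴴ := rfl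
  rw [hadd1, hadd2, hpAe, Bbar_pA src tgt bar Ω v w hinv hbs hbt hor p0 A ℏ e]
  by_cases he : Ω e
  · rw [if_pos he, if_pos he]
    simp only [eps, if_pos he, one_smul]
    exact alg1 (p0.1 e) (A.1 e) (Bbar src tgt bar v w hbs hbt p0 e)
      (Bbar src tgt bar v w hbs hbt A e) hh
  · rw [if_neg he, if_neg he]
    simp only [eps, if_neg he]
    exact alg2 (p0.1 e) (A.1 e) (Bbar src tgt bar v w hbs hbt p0 e)
      (Bbar src tgt bar v w hbs hbt A e) hh

/-- if `μ_ℝ(p_0) = ζ_ℝ`, `μ_ℂ(p_0) = 0`, `μ_ℂ(p_0 + A) = 0` and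
`l_{p_0}^*(A) = 0`, then `μ_ℂ(p_A(ℏ))_k = −2i·ζ_ℝ^k` for every `ℏ ≠ 0`. -/
theorem muC_pA_of_slice {n : ℕ} {E : Type*} [Fintype E]
    (src tgt : E → Fin n) (bar : E → E) (Ω : E → Prop) [DecidablePred Ω]
    (v w : Fin n → ℕ)
    (hloop : ∀ h, src h ≠ tgt h)
    (hinv : ∀ h, bar (bar h) = h) (hfree : ∀ h, bar h ≠ h)
    (hbs : ∀ h, src (bar h) = tgt h) (hbt : ∀ h, tgt (bar h) = src h)
    (hor : ∀ h, Ω (bar h) ↔ ¬ Ω h)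
    (ζ : ∀ k : Fin n, Matrix (Fin (v k)) (Fin (v k)) ℂ)
    (p0 A : Rep src tgt v w)
    (h1 : ∀ k, muR src tgt bar v w hbs hbt p0 k = ζ k)
    (h2 : ∀ k, muC src tgt bar Ω v w hbs hbt p0 k = 0)
    (h3 : ∀ k, muC src tgt bar Ω v w hbs hbt (p0 + A) k = 0)
    (h4 : ∀ k, lpStar src tgt bar v w hbs hbt p0 A k = 0)
    (ℏ : ℂ) (hh : ℏ ≠ 0) (k : Fin n) :
    muC src tgt bar Ω v w hbs hbt (pA src tgt bar Ω v w hbs hbt p0 A ℏ) k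
      = (-(2 * Complex.I)) • ζ k := by
  have key : ∀ e : E,
      (if he : tgt e = k then
          eps Ω e • castM2 v he he
            ((pA src tgt bar Ω v w hbs hbt p0 A ℏ).1 e *
              Bbar src tgt bar v w hbs hbt (pA src tgt bar Ω v w hbs hbt p0 A ℏ) e)
        else 0)
      = ℏ⁻¹ • (if he : tgt e = k then
            eps Ω e • castM2 v he he ((p0 + A).1 e * Bbar src tgt bar v w hbs hbt (p0 + A) e)
          else 0)
        + (-ℏ) • (if he : tgt e = k then
            eps Ω e • castM2 v he he (p0.1 e * Bbar src tgt bar v w hbs hbt p0 e)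
          else 0)ᴴ
        + (if he : tgt e = k then
            castM2 v he he (p0.1 e * (p0.1 e)ᴴ
              - (Bbar src tgt bar v w hbs hbt p0 e)ᴴ * Bbar src tgt bar v w hbs hbt p0 e)
          else 0)
        + (if he : tgt e = k then
            castM2 v he he (A.1 e * (p0.1 e)ᴴ
              - (Bbar src tgt bar v w hbs hbt p0 e)ᴴ * Bbar src tgt bar v w hbs hbt A e)
          else 0) := by
    intro e
    by_cases he : tgt e = k
    · subst he
      rw [dif_pos rfl, dif_pos rfl, dif_pos rfl, dif_pos rfl, dif_pos rfl,
        castM2_id, castM2_id, castM2_id, castM2_id, castM2_id]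
      exact key_term src tgt bar Ω v w hinv hbs hbt hor p0 A ℏ hh e
    · rw [dif_neg he, dif_neg he, dif_neg he, dif_neg he, dif_neg he]
      simp
  show (∑ e : E, if he : tgt e = k then
        eps Ω e • castM2 v he he
          ((pA src tgt bar Ω v w hbs hbt p0 A ℏ).1 e *
            Bbar src tgt bar v w hbs hbt (pA src tgt bar Ω v w hbs hbt p0 A ℏ) e)
      else 0)
      + (pA src tgt bar Ω v w hbs hbt p0 A ℏ).2.1 k *
          (pA src tgt bar Ω v w hbs hbt p0 A ℏ).2.2 k
    = (-(2 * Complex.I)) • ζ k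
  rw [Finset.sum_congr rfl (fun e _ => key e)]
  rw [Finset.sum_add_distrib, Finset.sum_add_distrib, Finset.sum_add_distrib,
    ← Finset.smul_sum, ← Finset.smul_sum, ← Matrix.conjTranspose_sum]
  rw [show (pA src tgt bar Ω v w hbs hbt p0 A ℏ).2.1 k *
        (pA src tgt bar Ω v w hbs hbt p0 A ℏ).2.2 k
      = ℏ⁻¹ • ((p0 + A).2.1 k * (p0 + A).2.2 k) + (-ℏ) • (p0.2.1 k * p0.2.2 k)ᴴ
        + (p0.2.1 k * (p0.2.1 k)ᴴ - (p0.2.2 k)ᴴ * p0.2.2 k)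
        + (A.2.1 k * (p0.2.1 k)ᴴ - (p0.2.2 k)ᴴ * A.2.2 k)
    from alg1 (p0.2.1 k) (A.2.1 k) (p0.2.2 k) (A.2.2 k) hh]
  have regroup : ∀ X1 X2 X3 X4 Y1 Y2 Y3 Y4 : Matrix (Fin (v k)) (Fin (v k)) ℂ,
      (ℏ⁻¹ • X1 + (-ℏ) • X2ᴴ + X3 + X4) + (ℏ⁻¹ • Y1 + (-ℏ) • Y2ᴴ + Y3 + Y4)
        = ℏ⁻¹ • (X1 + Y1) + (-ℏ) • (X2 + Y2)ᴴ + (X3 + Y3) + (X4 + Y4) := by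
    intro X1 X2 X3 X4 Y1 Y2 Y3 Y4
    simp only [Matrix.conjTranspose_add, smul_add]
    abel
  rw [regroup]
  have e3 : (∑ e : E, if he : tgt e = k then
        eps Ω e • castM2 v he he ((p0 + A).1 e * Bbar src tgt bar v w hbs hbt (p0 + A) e)
      else 0) + (p0 + A).2.1 k * (p0 + A).2.2 k = 0 := h3 k
  have e2 : (∑ e : E, if he : tgt e = k then
        eps Ω e • castM2 v he he (p0.1 e * Bbar src tgt bar v w hbs hbt p0 e)
      else 0) + p0.2.1 k * p0.2.2 k = 0 := h2 k
  have e4 : (∑ e : E, if he : tgt e = k then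
        castM2 v he he (A.1 e * (p0.1 e)ᴴ
          - (Bbar src tgt bar v w hbs hbt p0 e)ᴴ * Bbar src tgt bar v w hbs hbt A e)
      else 0) + (A.2.1 k * (p0.2.1 k)ᴴ - (p0.2.2 k)ᴴ * A.2.2 k) = 0 := h4 k
  have e1 : (Complex.I / 2) • ((∑ e : E, if he : tgt e = k then
        castM2 v he he (p0.1 e * (p0.1 e)ᴴ
          - (Bbar src tgt bar v w hbs hbt p0 e)ᴴ * Bbar src tgt bar v w hbs hbt p0 e)
      else 0) + (p0.2.1 k * (p0.2.1 k)ᴴ - (p0.2.2 k)ᴴ * p0.2.2 k)) = ζ k := h1 k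
  rw [e3, e2, e4]
  simp only [smul_zero, Matrix.conjTranspose_zero, add_zero, zero_add]
  have hfact : (-(2 * Complex.I)) * (Complex.I / 2) = 1 := by
    linear_combination -Complex.I_mul_I
  rw [← e1, smul_smul, hfact, one_smul]

end

end QuiverCL
end

section
/- Let p = (B,i,j) ∈ 𝕄 and let ξ = (ξ_k) be a tuple of hermitian matrices (ξ_k† = ξ_k). Then Σ_{k=1}^n Tr((ℒ(p,ξ)_k)† · ξ_k) = ⟨l_p(ξ), l_p(ξ)⟩ = ‖l_p(ξ)‖² ≥ 0. In particular, if ℒ(p,ξ)_k = 0 for all k, then l_p(ξ) = 0. -/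
open Matrix Filter Topology

namespace QuiverCL

noncomputable section

variable {n : ℕ} {E : Type*}

/-! For Hermitian `ξ` the linearization is `ℒ(p,ξ) = (l_p^* l_p ξ)†`, where `l_p^*` is the
adjoint of `l_p` for the trace pairing: the terms `B_{h̄}† (⋯) B_{h̄}` sitting at `in(h) = k`
are, after reindexing by the involution `h ↦ h̄`, the `out(h) = k` terms of `⟨q, l_p ξ⟩`.
Hence `Σ_k Tr(ℒ(p,ξ)_k† ξ_k) = ⟨l_p ξ, l_p ξ⟩`, a sum of traces of positive semidefinite
matrices `M M†`, which vanishes only when every `M` does. -/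

open scoped ComplexOrder

section Cast

variable (v : Fin n → ℕ) {a b a' b' : Fin n} (ea : a = a') (eb : b = b')

@[simp]
lemma castM2_rfl (M : Matrix (Fin (v a)) (Fin (v b)) ℂ) : castM2 v rfl rfl M = M := by
  simp [castM2]

lemma conjTranspose_castM2 (M : Matrix (Fin (v a)) (Fin (v b)) ℂ) :
    (castM2 v ea eb M)ᴴ = castM2 v eb ea Mᴴ := by
  subst ea eb; simp

lemma castM2_mul_sub_mul (ξ : ∀ k : Fin n, Matrix (Fin (v k)) (Fin (v k)) ℂ)
    (M : Matrix (Fin (v a)) (Fin (v b)) ℂ) :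
    castM2 v ea eb (ξ a * M - M * ξ b) = ξ a' * castM2 v ea eb M - castM2 v ea eb M * ξ b' := by
  subst ea eb; simp

lemma trace_conjTranspose_castM2_mul_castM2_mul (Y : ∀ k : Fin n, Matrix (Fin (v k)) (Fin (v k)) ℂ)
    (M N : Matrix (Fin (v a)) (Fin (v b)) ℂ) :
    ((castM2 v ea eb M)ᴴ * castM2 v ea eb N * Y b').trace = (Mᴴ * N * Y b).trace := by
  subst ea eb; simp

end Cast

section Sums

variable [Fintype E] (src tgt : E → Fin n) (v : Fin n → ℕ)
  (Y : ∀ k : Fin n, Matrix (Fin (v k)) (Fin (v k)) ℂ)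

lemma sum_trace_sum_dite_tgt_mul (X : ∀ h : E, Matrix (Fin (v (tgt h))) (Fin (v (tgt h))) ℂ) :
    ∑ k : Fin n, ((∑ h : E, if e : tgt h = k then castM2 v e e (X h) else 0) * Y k).trace
      = ∑ h : E, (X h * Y (tgt h)).trace := by
  simp only [Finset.sum_mul, trace_sum]
  rw [Finset.sum_comm]
  refine Finset.sum_congr rfl fun h _ => ?_
  simp only [dite_mul, zero_mul, apply_dite trace, trace_zero]
  simp

lemma sum_trace_conjTranspose_Bbar_mul_Bbar_mul {bar : E → E} (hinv : Function.Involutive bar)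
    (w : Fin n → ℕ) (hbs : ∀ h, src (bar h) = tgt h) (hbt : ∀ h, tgt (bar h) = src h)
    (p q : Rep src tgt v w) :
    ∑ h : E, ((Bbar src tgt bar v w hbs hbt p h)ᴴ * Bbar src tgt bar v w hbs hbt q h
        * Y (tgt h)).trace
      = ∑ h : E, ((p.1 h)ᴴ * q.1 h * Y (src h)).trace := by
  simp only [Bbar, trace_conjTranspose_castM2_mul_castM2_mul]
  exact Fintype.sum_bijective bar hinv.bijective _ _ fun h => rfl

end Sums

section Gauge

variable {src tgt : E → Fin n} {bar : E → E} {v w : Fin n → ℕ}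
  {hbs : ∀ h, src (bar h) = tgt h} {hbt : ∀ h, tgt (bar h) = src h}
  (p : Rep src tgt v w) (ξ : ∀ k : Fin n, Matrix (Fin (v k)) (Fin (v k)) ℂ)

lemma Bbar_lp (h : E) :
    Bbar src tgt bar v w hbs hbt (lp src tgt v w p ξ) h
      = ξ (src h) * Bbar src tgt bar v w hbs hbt p h
        - Bbar src tgt bar v w hbs hbt p h * ξ (tgt h) :=
  castM2_mul_sub_mul v (hbt h) (hbs h) ξ (p.1 (bar h))

theorem innerRep_lp [Fintype E] (hinv : Function.Involutive bar) (q : Rep src tgt v w) :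
    innerRep src tgt v w q (lp src tgt v w p ξ)
      = ∑ k : Fin n, (lpStar src tgt bar v w hbs hbt p q k * (ξ k)ᴴ).trace := by
  simp only [lpStar, add_mul, trace_add, Finset.sum_add_distrib,
    sum_trace_sum_dite_tgt_mul tgt v (fun k => (ξ k)ᴴ)]
  simp only [sub_mul, trace_sub, Finset.sum_sub_distrib,
    sum_trace_conjTranspose_Bbar_mul_Bbar_mul src tgt v (fun k => (ξ k)ᴴ) hinv]
  have edge (h : E) : (q.1 h * (ξ (tgt h) * p.1 h - p.1 h * ξ (src h))ᴴ).trace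
      = (q.1 h * (p.1 h)ᴴ * (ξ (tgt h))ᴴ).trace - ((p.1 h)ᴴ * q.1 h * (ξ (src h))ᴴ).trace := by
    rw [conjTranspose_sub, conjTranspose_mul, conjTranspose_mul, Matrix.mul_sub, trace_sub,
      ← Matrix.mul_assoc, ← Matrix.mul_assoc, trace_mul_cycle (q.1 h) (ξ (src h))ᴴ]
  have framingIn (k : Fin n) : (q.2.1 k * (ξ k * p.2.1 k)ᴴ).trace
      = (q.2.1 k * (p.2.1 k)ᴴ * (ξ k)ᴴ).trace := by
    rw [conjTranspose_mul, Matrix.mul_assoc]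
  have framingOut (k : Fin n) : (q.2.2 k * (-(p.2.2 k * ξ k))ᴴ).trace
      = -((p.2.2 k)ᴴ * q.2.2 k * (ξ k)ᴴ).trace := by
    rw [conjTranspose_neg, conjTranspose_mul, Matrix.mul_neg, trace_neg, ← Matrix.mul_assoc,
      trace_mul_cycle]
  simp only [innerRep, lp, edge, framingIn, framingOut, Finset.sum_sub_distrib,
    Finset.sum_neg_distrib]
  abel

theorem linL_eq_conjTranspose_lpStar_lp [Fintype E] (hξ : ∀ k, (ξ k)ᴴ = ξ k) (k : Fin n) :
    linL src tgt bar v w hbs hbt p ξ k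
      = (lpStar src tgt bar v w hbs hbt p (lp src tgt v w p ξ) k)ᴴ := by
  simp only [linL, lpStar, conjTranspose_add, conjTranspose_sum, Bbar_lp]
  congr 1
  · refine Finset.sum_congr rfl fun h _ => ?_
    split_ifs with e
    · rw [conjTranspose_castM2]
      refine congrArg (castM2 v e e) ?_
      simp only [lp, conjTranspose_sub, conjTranspose_mul, conjTranspose_conjTranspose, hξ,
        Matrix.mul_sub, Matrix.sub_mul, Matrix.mul_assoc]
    · simp
  · simp [lp, hξ, Matrix.mul_assoc]

end Gauge

section Norm

lemma sum_trace_mul_conjTranspose_self_nonneg {ι : Type*} [Fintype ι] {r c : ι → Type*}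
    [∀ i, Fintype (r i)] [∀ i, Fintype (c i)] (M : ∀ i, Matrix (r i) (c i) ℂ) :
    0 ≤ ∑ i, (M i * (M i)ᴴ).trace :=
  Finset.sum_nonneg fun _ _ => (posSemidef_self_mul_conjTranspose _).trace_nonneg

variable [Fintype E] {src tgt : E → Fin n} {v w : Fin n → ℕ} (q : Rep src tgt v w)

lemma innerRep_self_nonneg : 0 ≤ innerRep src tgt v w q q :=
  add_nonneg (add_nonneg (sum_trace_mul_conjTranspose_self_nonneg _)
    (sum_trace_mul_conjTranspose_self_nonneg _)) (sum_trace_mul_conjTranspose_self_nonneg _)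

lemma innerRep_self_eq_zero_iff : innerRep src tgt v w q q = 0 ↔ q = 0 := by
  unfold innerRep
  rw [add_eq_zero_iff_of_nonneg (add_nonneg (sum_trace_mul_conjTranspose_self_nonneg _)
      (sum_trace_mul_conjTranspose_self_nonneg _)) (sum_trace_mul_conjTranspose_self_nonneg _),
    add_eq_zero_iff_of_nonneg (sum_trace_mul_conjTranspose_self_nonneg _)
      (sum_trace_mul_conjTranspose_self_nonneg _)]
  simp only [Finset.sum_eq_zero_iff_of_nonneg fun _ _ =>
      (posSemidef_self_mul_conjTranspose _).trace_nonneg, Finset.mem_univ, true_implies,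
    trace_mul_conjTranspose_self_eq_zero_iff, Prod.ext_iff, funext_iff]
  exact and_assoc

end Norm

theorem linL_positivity_general {n : ℕ} {E : Type*} [Fintype E]
    (src tgt : E → Fin n) (bar : E → E)
    (v w : Fin n → ℕ)
    (hinv : ∀ h, bar (bar h) = h)
    (hbs : ∀ h, src (bar h) = tgt h) (hbt : ∀ h, tgt (bar h) = src h)
    (p : Rep src tgt v w)
    (ξ : ∀ k : Fin n, Matrix (Fin (v k)) (Fin (v k)) ℂ)
    (hξ : ∀ k, (ξ k)ᴴ = ξ k) :
    (∑ k : Fin n, ((linL src tgt bar v w hbs hbt p ξ k)ᴴ * ξ k).trace)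
        = innerRep src tgt v w (lp src tgt v w p ξ) (lp src tgt v w p ξ)
    ∧ (innerRep src tgt v w (lp src tgt v w p ξ) (lp src tgt v w p ξ)).im = 0
    ∧ 0 ≤ (innerRep src tgt v w (lp src tgt v w p ξ) (lp src tgt v w p ξ)).re
    ∧ ((∀ k, linL src tgt bar v w hbs hbt p ξ k = 0) → lp src tgt v w p ξ = 0) := by
  have hL : (∑ k : Fin n, ((linL src tgt bar v w hbs hbt p ξ k)ᴴ * ξ k).trace)
      = innerRep src tgt v w (lp src tgt v w p ξ) (lp src tgt v w p ξ) := by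
    rw [innerRep_lp (hbs := hbs) (hbt := hbt) p ξ hinv]
    simp only [linL_eq_conjTranspose_lpStar_lp p ξ hξ, conjTranspose_conjTranspose, hξ]
  obtain ⟨hre, him⟩ := Complex.nonneg_iff.mp (innerRep_self_nonneg (lp src tgt v w p ξ))
  refine ⟨hL, him.symm, hre, fun hzero => ?_⟩
  rw [← innerRep_self_eq_zero_iff, ← hL]
  simp [hzero]

/-- `Σ_k Tr((ℒ(p,ξ)_k)†·ξ_k) = ⟨l_p(ξ), l_p(ξ)⟩ = ‖l_p(ξ)‖² ≥ 0`
(a nonnegative real number); in particular `ℒ(p,ξ) = 0` implies `l_p(ξ) = 0`. -/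
theorem linL_positivity {n : ℕ} {E : Type*} [Fintype E]
    (src tgt : E → Fin n) (bar : E → E) (Ω : E → Prop) [DecidablePred Ω]
    (v w : Fin n → ℕ)
    (hloop : ∀ h, src h ≠ tgt h)
    (hinv : ∀ h, bar (bar h) = h) (hfree : ∀ h, bar h ≠ h)
    (hbs : ∀ h, src (bar h) = tgt h) (hbt : ∀ h, tgt (bar h) = src h)
    (hor : ∀ h, Ω (bar h) ↔ ¬ Ω h)
    (p : Rep src tgt v w)
    (ξ : ∀ k : Fin n, Matrix (Fin (v k)) (Fin (v k)) ℂ)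
    (hξ : ∀ k, (ξ k)ᴴ = ξ k) :
    (∑ k : Fin n, ((linL src tgt bar v w hbs hbt p ξ k)ᴴ * ξ k).trace)
        = innerRep src tgt v w (lp src tgt v w p ξ) (lp src tgt v w p ξ)
    ∧ (innerRep src tgt v w (lp src tgt v w p ξ) (lp src tgt v w p ξ)).im = 0
    ∧ 0 ≤ (innerRep src tgt v w (lp src tgt v w p ξ) (lp src tgt v w p ξ)).re
    ∧ ((∀ k, linL src tgt bar v w hbs hbt p ξ k = 0) → lp src tgt v w p ξ = 0) :=
  linL_positivity_general src tgt bar v w hinv hbs hbt p ξ hξ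

end
end QuiverCL
end
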